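/- For atoms A, B and m > rank(B) and any t > 0, succ(B^{m+t}, A) = succ(B^m, A) followed by t copies of the last atom of succ(B^m, A). In other words, iterating C_{i+1} = gen(B, C_i) from C₀ = A stabilizes after at most rank(B) + 1 steps: for all i ≥ rank(B) + 1, C_i = C_{rank(B)+1}. -/
import Mathlib


structure Atom (α β : Type) where
  req : Finset α
  prop : Finset β
deriving DecidableEq

def gen {α β : Type} [DecidableEq α] [DecidableEq β]
    (Obs : Atom α β → Finset α) (A B : Atom α β) : Atom α β :=
  ⟨A.req ∪ B.req ∪ Obs A ∪ Obs B, A.prop ∩ B.prop⟩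

def rank {α β : Type} (REQ : Finset α) (A : Atom α β) : ℕ :=
  REQ.card - A.req.card

theorem Atom.ext' {α β : Type} {X Y : Atom α β} (h1 : X.req = Y.req)
    (h2 : X.prop = Y.prop) : X = Y := by
  cases X; cases Y; simp_all

/-- Iterating C_{i+1} = gen(B, C_i) from C₀ = A stabilizes after at most rank(B) + 1 steps. -/
theorem iterated_gen_stabilizes {α β : Type} [DecidableEq α] [DecidableEq β]
    (REQ : Finset α) (Obs : Atom α β → Finset α) (hObs : ∀ X, Obs X ⊆ REQ)
    (B A : Atom α β) (hB : B.req ⊆ REQ) (hA : A.req ⊆ REQ)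
    (C : ℕ → Atom α β) (h0 : C 0 = A) (hs : ∀ i, C (i + 1) = gen Obs B (C i)) :
    ∀ i, rank REQ B + 1 ≤ i → C i = C (rank REQ B + 1) := by
  set n := rank REQ B with hn
  have hsub : ∀ j, (C j).req ⊆ REQ := by
    intro j
    induction j with
    | zero => rw [h0]; exact hA
    | succ k ih =>
        rw [hs k]
        simp only [gen]
        exact Finset.union_subset (Finset.union_subset (Finset.union_subset hB ih)
          (hObs B)) (hObs (C k))
  have hmono : ∀ j, (C j).req ⊆ (C (j + 1)).req := by
    intro j
    rw [hs j]
    simp only [gen]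
    intro x hx
    simp [hx]
  have hBsub : B.req ⊆ (C 1).req := by
    rw [hs 0]
    intro x hx
    simp [gen, hx]
  have hprop : ∀ j, (C (j + 2)).prop = (C (j + 1)).prop := by
    intro j
    rw [hs (j + 1), hs j]
    simp only [gen]
    rw [← Finset.inter_assoc, Finset.inter_self]
  -- stability propagation
  have hstab : ∀ k, C (k + 1) = C k → ∀ j, k ≤ j → C j = C k := by
    intro k hk j hj
    induction j with
    | zero => cases Nat.le_zero.mp hj; rfl
    | succ m ih =>
        rcases Nat.lt_or_ge k (m + 1) with h | h
        · have hm : C m = C k := ih (Nat.lt_succ_iff.mp h)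
          rw [hs m, hm, ← hs k, hk]
        · cases Nat.le_antisymm hj h; rfl
  -- card growth while not stabilized
  have hcard : ∀ m, (∀ k < m, C (k + 2) ≠ C (k + 1)) →
      B.req.card + m ≤ (C (m + 1)).req.card := by
    intro m
    induction m with
    | zero => intro _; simpa using Finset.card_le_card hBsub
    | succ p ih =>
        intro hne
        show B.req.card + (p + 1) ≤ (C (p + 2)).req.card
        have h1 : B.req.card + p ≤ (C (p + 1)).req.card :=
          ih (fun k hk => hne k (Nat.lt_succ_of_lt hk))
        have hne' : C (p + 2) ≠ C (p + 1) := hne p (Nat.lt_succ_self p)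
        have hreqne : (C (p + 1)).req ≠ (C (p + 2)).req := by
          intro h
          exact hne' (Atom.ext' h.symm (hprop p))
        have hss : (C (p + 1)).req ⊂ (C (p + 2)).req :=
          (Finset.ssubset_iff_subset_ne).mpr ⟨hmono (p + 1), hreqne⟩
        have := Finset.card_lt_card hss
        omega
  -- there is a stabilization point k ≤ n
  have hex : ∃ k ≤ n, C (k + 2) = C (k + 1) := by
    by_contra hcon
    push_neg at hcon
    have h1 : B.req.card + (n + 1) ≤ (C (n + 2)).req.card := by
      apply hcard
      intro k hk
      exact hcon k (Nat.lt_succ_iff.mp hk)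
    have h2 : (C (n + 2)).req.card ≤ REQ.card := Finset.card_le_card (hsub (n + 2))
    have h3 : B.req.card ≤ REQ.card := Finset.card_le_card hB
    have : n = REQ.card - B.req.card := hn
    omega
  obtain ⟨k, hk, hkstab⟩ := hex
  intro i hi
  have h1 : C i = C (k + 1) := hstab (k + 1) hkstab i (by omega)
  have h2 : C (n + 1) = C (k + 1) := hstab (k + 1) hkstab (n + 1) (by omega)
  rw [h1, h2]
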